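/- In the carry-less ring of nonnegative integers with XOR as addition and carry-less multiplication ⋆, the integer p = 2^{64} + 2^4 + 2^3 + 2 + 1 satisfies: for all nonzero w with degree(w) ≤ 3, the value (w ⋆ 2^{64}) mod p equals w ⋆ 27, and hence has degree at most 7 (fits in 8 bits). -/

import Mathlib

/-- Carry-less multiplication: `(a ⋆ b)ᵢ = ⨁ₖ a_{i-k} bₖ`. -/
def clmul : ℕ → ℕ → ℕ
  | 0, _ => 0
  | a + 1, b => (if (a + 1) % 2 = 1 then b else 0) ^^^ 2 * clmul ((a + 1) / 2) b
termination_by a _ => a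
decreasing_by simp_wf; omega

/-!
Division by `p = 2^64 ⊕ 27` leaves a remainder of degree below `64`, and carry-less remainders are
unique because a nonzero multiple of `b` has degree at least `deg b`. Since
`w ⋆ 2^64 = w ⋆ p ⊕ w ⋆ 27` and `deg (w ⋆ 27) ≤ deg w + deg 27 ≤ 7 < 64`, the remainder is `w ⋆ 27`.
-/

@[simp]
lemma clmul_zero_left (b : ℕ) : clmul 0 b = 0 := by
  simp [clmul]

lemma clmul_eq (a b : ℕ) : clmul a b = (if a % 2 = 1 then b else 0) ^^^ 2 * clmul (a / 2) b := by
  cases a with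
  | zero => simp
  | succ a => rw [clmul]

lemma two_mul_xor (x y : ℕ) : 2 * (x ^^^ y) = 2 * x ^^^ 2 * y := by
  simpa [Nat.shiftLeft_eq, mul_comm] using (Nat.shiftLeft_xor_distrib (a := x) (b := y) (i := 1))

lemma clmul_xor_right (a b c : ℕ) : clmul a (b ^^^ c) = clmul a b ^^^ clmul a c := by
  induction a using Nat.strong_induction_on with
  | _ a ih =>
    rcases eq_or_ne a 0 with rfl | ha
    · simp
    have hbit : (if a % 2 = 1 then b ^^^ c else 0) =
        (if a % 2 = 1 then b else 0) ^^^ (if a % 2 = 1 then c else 0) := by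
      split_ifs <;> simp
    rw [clmul_eq, clmul_eq a b, clmul_eq a c, ih (a / 2) (by omega), two_mul_xor, hbit]
    ac_rfl

lemma clmul_xor_left (a a' b : ℕ) : clmul (a ^^^ a') b = clmul a b ^^^ clmul a' b := by
  induction a using Nat.strong_induction_on generalizing a' with
  | _ a ih =>
    rcases eq_or_ne a 0 with rfl | ha
    · simp
    have hbit : (if (a ^^^ a') % 2 = 1 then b else 0) =
        (if a % 2 = 1 then b else 0) ^^^ (if a' % 2 = 1 then b else 0) := by
      rw [Nat.xor_mod_two_eq]
      rcases Nat.mod_two_eq_zero_or_one a with h | h <;>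
        rcases Nat.mod_two_eq_zero_or_one a' with h' | h' <;> simp [Nat.add_mod, h, h']
    rw [clmul_eq, clmul_eq a, clmul_eq a', Nat.xor_div_two, ih (a / 2) (by omega), two_mul_xor,
      hbit]
    ac_rfl

/-- `deg (a ⋆ b) ≤ deg a + deg b`, in terms of bounds by powers of two. -/
lemma clmul_lt_two_pow {a b m n : ℕ} (ha : a < 2 ^ (m + 1)) (hb : b < 2 ^ n) :
    clmul a b < 2 ^ (m + n) := by
  induction m generalizing a with
  | zero =>
    interval_cases a
    · simp
    · rw [clmul_eq]
      simpa using hb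
  | succ m ih =>
    rw [clmul_eq]
    have hhalf : 2 * clmul (a / 2) b < 2 ^ (m + 1 + n) := by
      have := ih (a := a / 2) (by rw [pow_succ] at ha; omega)
      rw [show m + 1 + n = m + n + 1 by ring, pow_succ]
      omega
    refine Nat.xor_lt_two_pow ?_ hhalf
    split_ifs
    · exact hb.trans_le (Nat.pow_le_pow_right two_pos (by omega))
    · exact Nat.two_pow_pos _

lemma two_pow_log2_le_clmul {b c : ℕ} (hb : b ≠ 0) (hc : c ≠ 0) :
    2 ^ Nat.log2 b ≤ clmul c b := by
  induction c using Nat.strong_induction_on with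
  | _ c ih =>
    have hb_lt : b < 2 ^ (Nat.log2 b + 1) := Nat.lt_log2_self
    rw [clmul_eq]
    rcases eq_or_ne (c / 2) 0 with hc2 | hc2
    · have hodd : c % 2 = 1 := by omega
      simpa [hc2, hodd] using Nat.log2_self_le hb
    have hhalf : 2 ^ (Nat.log2 b + 1) ≤ 2 * clmul (c / 2) b := by
      rw [pow_succ, mul_comm]
      exact Nat.mul_le_mul_left 2 (ih (c / 2) (by omega) hc2)
    -- the top bit of `2 * (c / 2 ⋆ b)` lies above every bit of `b`, so the xor cannot clear it
    by_contra! hlt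
    have hsmall : (if c % 2 = 1 then b else 0) < 2 ^ (Nat.log2 b + 1) := by
      split_ifs
      · exact hb_lt
      · exact Nat.two_pow_pos _
    have := Nat.xor_lt_two_pow hsmall (hlt.trans (Nat.pow_lt_pow_succ one_lt_two))
    rw [xor_cancel_left] at this
    omega

lemma eq_of_clmul_xor_eq {b q q' r r' : ℕ} (hb : b ≠ 0)
    (h : clmul q b ^^^ r = clmul q' b ^^^ r')
    (hr : r < 2 ^ Nat.log2 b) (hr' : r' < 2 ^ Nat.log2 b) : r = r' := by
  have hdiff : clmul (q ^^^ q') b = r ^^^ r' := by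
    rw [clmul_xor_left, ← xor_cancel_right (clmul q' b) r', ← h, xor_assoc, xor_cancel_left]
  rcases eq_or_ne (q ^^^ q') 0 with hq | hq
  · rw [hq, clmul_zero_left, eq_comm, xor_eq_zero_iff] at hdiff
    exact hdiff
  · have := two_pow_log2_le_clmul hb hq
    have := Nat.xor_lt_two_pow hr hr'
    omega

/-- For p = 2^64 ⊕ 27 and nonzero w of degree ≤ 3 (w < 16),
(w ⋆ 2^64) mod p = w ⋆ 27, which has degree at most 7. -/
theorem stmt19 (cldiv clmod : ℕ → ℕ → ℕ)
    (hchar : ∀ a b : ℕ, b ≠ 0 →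
      a = clmul (cldiv a b) b ^^^ clmod a b ∧ clmod a b < 2 ^ Nat.log2 b) :
    ∀ w : ℕ, w ≠ 0 → w < 16 →
      clmod (clmul w (2 ^ 64)) (2 ^ 64 ^^^ 27) = clmul w 27 ∧
      Nat.log2 (clmul w 27) ≤ 7 := by
  intro w _ hw
  have hp : (2 ^ 64 ^^^ 27 : ℕ) ≠ 0 := by decide
  have hlog : Nat.log2 (2 ^ 64 ^^^ 27) = 64 := by decide
  have hdeg : clmul w 27 < 2 ^ 8 := clmul_lt_two_pow (m := 3) (n := 5) hw (by norm_num)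
  have hsplit : clmul w (2 ^ 64) = clmul w (2 ^ 64 ^^^ 27) ^^^ clmul w 27 := by
    rw [← clmul_xor_right, xor_cancel_right]
  obtain ⟨hdiv, hrem⟩ := hchar (clmul w (2 ^ 64)) _ hp
  refine ⟨eq_of_clmul_xor_eq hp (hdiv.symm.trans hsplit) hrem ?_, ?_⟩
  · rw [hlog]
    exact hdeg.trans_le (Nat.pow_le_pow_right two_pos (by norm_num))
  · rcases eq_or_ne (clmul w 27) 0 with h0 | h0
    · simp [h0]
    · exact Nat.lt_succ_iff.mp ((Nat.log2_lt h0).2 hdeg)
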